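/- arXiv:1711.01947 — 5 statements merged into one kernel-verified Lean document; each statement's English description precedes it below -/
import Mathlib

section
/- If j : [0,1] → [0,1] is a continuous piecewise linear bijection such that every linear piece of j has integer coefficients, then j is either the identity function or the map x ↦ 1 - x. -/
/-- `f` is piecewise linear on `[0,1]` with integer coefficients:
there is a finite partition of `[0,1]` into subintervals on each of which
`f x = a * x + b` for integers `a`, `b`. -/
def IsPWLZ (f : ℝ → ℝ) : Prop :=
  ∃ (n : ℕ) (c : Fin (n + 1) → ℝ), c 0 = 0 ∧ c (Fin.last n) = 1 ∧ Monotone c ∧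
    ∀ i : Fin n, ∃ a b : ℤ, ∀ x ∈ Set.Icc (c i.castSucc) (c i.succ),
      f x = (a : ℝ) * x + (b : ℝ)

/-- A McNaughton function: a `[0,1]`-valued continuous piecewise linear
function on `[0,1]` with integer coefficients. -/
def McNaughton (f : ℝ → ℝ) : Prop :=
  IsPWLZ f ∧ ContinuousOn f (Set.Icc (0:ℝ) 1) ∧
    ∀ x ∈ Set.Icc (0:ℝ) 1, f x ∈ Set.Icc (0:ℝ) 1

/-- Key lemma: a strictly monotone PWLZ bijection of `[0,1]` is the identity. -/
lemma key_mono (j : ℝ → ℝ) (hPWL : IsPWLZ j)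
    (hbij : Set.BijOn j (Set.Icc (0:ℝ) 1) (Set.Icc (0:ℝ) 1))
    (hmono : StrictMonoOn j (Set.Icc (0:ℝ) 1)) :
    ∀ x ∈ Set.Icc (0:ℝ) 1, j x = x := by
  obtain ⟨n, c, hc0, hcl, hcm, hp⟩ := hPWL
  choose a b hab using hp
  have h0mem : (0:ℝ) ∈ Set.Icc (0:ℝ) 1 := by norm_num
  have h1mem : (1:ℝ) ∈ Set.Icc (0:ℝ) 1 := by norm_num
  obtain ⟨y0, hy0, hjy0⟩ := hbij.surjOn h0mem
  have hj0 : j 0 = 0 :=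
    le_antisymm (hjy0 ▸ hmono.monotoneOn h0mem hy0 hy0.1) (hbij.mapsTo h0mem).1
  obtain ⟨y1, hy1, hjy1⟩ := hbij.surjOn h1mem
  have hj1 : j 1 = 1 :=
    le_antisymm (hbij.mapsTo h1mem).2
      (le_of_eq_of_le hjy1.symm (hmono.monotoneOn hy1 h1mem hy1.2))
  have hck : ∀ k, c k ∈ Set.Icc (0:ℝ) 1 := fun k =>
    ⟨hc0 ▸ hcm (Fin.zero_le k), hcl ▸ hcm (Fin.le_last k)⟩
  have hlt : ∀ k : ℕ, min k n < n + 1 := fun k => by omega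
  set C : ℕ → ℝ := fun k => c ⟨min k n, hlt k⟩ with hC
  have hCmem : ∀ k, C k ∈ Set.Icc (0:ℝ) 1 := fun k => hck _
  have hCcast : ∀ i : Fin n, C i.val = c i.castSucc := by
    intro i
    simp only [hC]
    congr 1
    exact Fin.ext (by simp [Nat.min_eq_left i.isLt.le])
  have hCsucc : ∀ i : Fin n, C (i.val + 1) = c i.succ := by
    intro i
    simp only [hC]
    congr 1
    exact Fin.ext (by simp [Nat.min_eq_left (Nat.succ_le_of_lt i.isLt)])
  have hC0 : C 0 = 0 := by
    rw [hC]
    simp only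
    rw [show (⟨min 0 n, hlt 0⟩ : Fin (n+1)) = 0 from Fin.ext (by simp)]
    exact hc0
  have hCn : C n = 1 := by
    rw [hC]
    simp only
    rw [show (⟨min n n, hlt n⟩ : Fin (n+1)) = Fin.last n from Fin.ext (by simp [Fin.last])]
    exact hcl
  set A : ℕ → ℝ := fun k => if h : k < n then ((a ⟨k, h⟩ : ℤ) : ℝ) else 0 with hA
  have hterm : ∀ k ∈ Finset.range n, j (C (k+1)) - j (C k) = A k * (C (k+1) - C k) := by
    intro k hk
    rw [Finset.mem_range] at hk
    have h1 : C k = c (⟨k, hk⟩ : Fin n).castSucc := hCcast ⟨k, hk⟩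
    have h2 : C (k+1) = c (⟨k, hk⟩ : Fin n).succ := hCsucc ⟨k, hk⟩
    have hle : c (⟨k, hk⟩ : Fin n).castSucc ≤ c (⟨k, hk⟩ : Fin n).succ :=
      hcm (Fin.castSucc_lt_succ).le
    have e1 := hab ⟨k, hk⟩ _ (Set.left_mem_Icc.mpr hle)
    have e2 := hab ⟨k, hk⟩ _ (Set.right_mem_Icc.mpr hle)
    rw [h1, h2, e1, e2, hA]
    simp only [dif_pos hk]
    ring
  have hlen : ∀ k ∈ Finset.range n, (0:ℝ) ≤ C (k+1) - C k := by
    intro k hk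
    rw [Finset.mem_range] at hk
    have := hcm ((show (⟨k, hk⟩ : Fin n).castSucc < (⟨k, hk⟩ : Fin n).succ from Fin.castSucc_lt_succ).le)
    rw [hCcast ⟨k, hk⟩, hCsucc ⟨k, hk⟩]
    linarith
  have hsum1 : ∑ k ∈ Finset.range n, (C (k+1) - C k) = 1 := by
    rw [Finset.sum_range_sub C, hCn, hC0]; ring
  have hsum2 : ∑ k ∈ Finset.range n, (j (C (k+1)) - j (C k)) = 1 := by
    rw [Finset.sum_range_sub (fun k => j (C k)), hCn, hC0, hj0, hj1]; ring
  have hApos : ∀ k ∈ Finset.range n, C k < C (k+1) → 1 ≤ A k := by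
    intro k hk hlt'
    have hjlt : j (C k) < j (C (k+1)) := hmono (hCmem k) (hCmem (k+1)) hlt'
    have h := hterm k hk
    have hAL : 0 < A k * (C (k+1) - C k) := by linarith
    have hApos' : 0 < A k := by
      rcases mul_pos_iff.mp hAL with ⟨h1, _⟩ | ⟨_, h2⟩
      · exact h1
      · linarith
    rw [Finset.mem_range] at hk
    rw [hA] at hApos' ⊢
    simp only [dif_pos hk] at hApos' ⊢
    have : 0 < a ⟨k, hk⟩ := by exact_mod_cast hApos'
    exact_mod_cast this
  have hzero : ∀ k ∈ Finset.range n, (A k - 1) * (C (k+1) - C k) = 0 := by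
    have hnn : ∀ k ∈ Finset.range n, 0 ≤ (A k - 1) * (C (k+1) - C k) := by
      intro k hk
      rcases eq_or_lt_of_le (hlen k hk) with h | h
      · rw [← h, mul_zero]
      · have := hApos k hk (by linarith)
        exact mul_nonneg (by linarith) h.le
    have hsum0 : ∑ k ∈ Finset.range n, (A k - 1) * (C (k+1) - C k) = 0 := by
      have he : ∀ k ∈ Finset.range n, (A k - 1) * (C (k+1) - C k)
          = (j (C (k+1)) - j (C k)) - (C (k+1) - C k) := by
        intro k hk; rw [hterm k hk]; ring
      rw [Finset.sum_congr rfl he, Finset.sum_sub_distrib, hsum1, hsum2]; ring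
    exact fun k hk => le_antisymm
      (by
        have := Finset.sum_eq_zero_iff_of_nonneg hnn |>.mp hsum0 k hk
        exact this.le) (hnn k hk)
  have hslope : ∀ i : Fin n, c i.castSucc < c i.succ → ((a i : ℤ) : ℝ) = 1 := by
    intro i hlt'
    have hk : i.val ∈ Finset.range n := Finset.mem_range.mpr i.isLt
    have h := hzero i.val hk
    rw [hCcast i, hCsucc i] at h
    have hAi : A i.val = ((a i : ℤ) : ℝ) := by
      rw [hA]; simp only [dif_pos i.isLt, Fin.eta]
    rw [hAi] at h
    have hne : (c i.succ - c i.castSucc) ≠ 0 := by linarith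
    rcases mul_eq_zero.mp h with h' | h'
    · linarith
    · exact absurd h' hne
  have main : ∀ k : Fin (n+1), ∀ x ∈ Set.Icc (0:ℝ) (c k), j x = x := by
    intro k
    induction k using Fin.induction with
    | zero =>
      intro x hx
      rw [hc0] at hx
      have hx0 : x = 0 := le_antisymm hx.2 hx.1
      rw [hx0, hj0]
    | succ i ih =>
      intro x hx
      rcases le_or_gt x (c i.castSucc) with h | h
      · exact ih x ⟨hx.1, h⟩
      · have hlt' : c i.castSucc < c i.succ := lt_of_lt_of_le h hx.2
        have ha1 : ((a i : ℤ) : ℝ) = 1 := hslope i hlt'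
        have hcs0 : 0 ≤ c i.castSucc := (hck i.castSucc).1
        have hend := ih (c i.castSucc) ⟨hcs0, le_rfl⟩
        have e1 := hab i (c i.castSucc) ⟨le_rfl, hlt'.le⟩
        have e2 := hab i x ⟨h.le, hx.2⟩
        rw [ha1] at e1 e2
        have hb : ((b i : ℤ) : ℝ) = 0 := by
          rw [hend] at e1; linarith
        rw [e2, hb]; ring
  intro x hx
  have h := main (Fin.last n)
  rw [hcl] at h
  exact h x hx

/-- A continuous piecewise linear bijection of `[0,1]` onto itself whose linear
pieces have integer coefficients is either the identity or `x ↦ 1 - x`. -/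
theorem stmt0 (j : ℝ → ℝ) (hPWL : IsPWLZ j)
    (hcont : ContinuousOn j (Set.Icc (0:ℝ) 1))
    (hbij : Set.BijOn j (Set.Icc (0:ℝ) 1) (Set.Icc (0:ℝ) 1)) :
    (∀ x ∈ Set.Icc (0:ℝ) 1, j x = x) ∨ (∀ x ∈ Set.Icc (0:ℝ) 1, j x = 1 - x) := by
  have hinj := hbij.injOn
  rcases ContinuousOn.strictMonoOn_of_injOn_Icc' (by norm_num : (0:ℝ) ≤ 1) hcont hinj
    with hm | hanti
  · exact Or.inl (key_mono j hPWL hbij hm)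
  · right
    set g : ℝ → ℝ := fun x => 1 - j x with hg
    have hgPWL : IsPWLZ g := by
      obtain ⟨n, c, h0, hl, hm', hp⟩ := hPWL
      refine ⟨n, c, h0, hl, hm', fun i => ?_⟩
      obtain ⟨a, b, habi⟩ := hp i
      refine ⟨-a, 1 - b, fun x hx => ?_⟩
      rw [hg]
      simp only
      rw [habi x hx]
      push_cast
      ring
    have hr : Set.BijOn (fun y : ℝ => 1 - y) (Set.Icc (0:ℝ) 1) (Set.Icc (0:ℝ) 1) := by
      refine ⟨?_, ?_, ?_⟩
      · intro y hy
        simp only [Set.mem_Icc] at hy ⊢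
        constructor <;> linarith
      · intro x _ y _ h
        simp only at h
        linarith
      · intro y hy
        refine ⟨1 - y, ?_, by simp⟩
        simp only [Set.mem_Icc] at hy ⊢
        constructor <;> linarith
    have hgbij : Set.BijOn g (Set.Icc (0:ℝ) 1) (Set.Icc (0:ℝ) 1) := by
      have := hr.comp hbij
      exact this
    have hgmono : StrictMonoOn g (Set.Icc (0:ℝ) 1) := by
      intro x hx y hy hxy
      have := hanti hx hy hxy
      simp only [hg]
      linarith
    intro x hx
    have h := key_mono g hgPWL hgbij hgmono x hx
    simp only [hg] at h
    linarith
end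

section
/- If an equation in the language (0, ⊕, *) fails in the standard MV algebra [0,1] under some assignment of values, then it fails under some assignment of rational values in [0,1] ∩ ℚ. -/
/-- Terms in the language `0, ⊕, *` of MV algebras. -/
inductive MVTerm : Type
  | zero : MVTerm
  | var : ℕ → MVTerm
  | star : MVTerm → MVTerm
  | oplus : MVTerm → MVTerm → MVTerm

/-- Evaluation of an MV term in the standard MV algebra `[0,1]`
(`x* = 1 - x`, `x ⊕ y = min 1 (x + y)`). -/
def MVTerm.eval (v : ℕ → ℝ) : MVTerm → ℝ
  | MVTerm.zero => 0
  | MVTerm.var n => v n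
  | MVTerm.star t => 1 - t.eval v
  | MVTerm.oplus t s => min 1 (t.eval v + s.eval v)

/-- Number of variable occurrences. -/
def MVTerm.vsize : MVTerm → ℕ
  | MVTerm.zero => 0
  | MVTerm.var _ => 1
  | MVTerm.star t => t.vsize
  | MVTerm.oplus t s => t.vsize + s.vsize

lemma abs_min_sub_min_le (c a b : ℝ) : |min c a - min c b| ≤ |a - b| := by
  have := abs_min_sub_min_le_max c a c b
  simpa using this

lemma abs_max_sub_max_le (c a b : ℝ) : |max c a - max c b| ≤ |a - b| := by
  have := abs_max_sub_max_le_max c a c b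
  simpa using this

lemma eval_lipschitz (v w : ℕ → ℝ) (δ : ℝ) (hvw : ∀ n, |v n - w n| ≤ δ) :
    ∀ u : MVTerm, |u.eval v - u.eval w| ≤ u.vsize * δ := by
  have hδ : 0 ≤ δ := le_trans (abs_nonneg _) (hvw 0)
  intro u
  induction u with
  | zero => simp [MVTerm.eval, MVTerm.vsize]
  | var n => simpa [MVTerm.eval, MVTerm.vsize] using hvw n
  | star t ih =>
      simp only [MVTerm.eval, MVTerm.vsize]
      have heq : (1 - t.eval v) - (1 - t.eval w) = -(t.eval v - t.eval w) := by ring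
      rw [heq, abs_neg]
      exact ih
  | oplus a b iha ihb =>
      have h1 : |min 1 (a.eval v + b.eval v) - min 1 (a.eval w + b.eval w)| ≤
          |(a.eval v + b.eval v) - (a.eval w + b.eval w)| := abs_min_sub_min_le _ _ _
      have h2 : |(a.eval v + b.eval v) - (a.eval w + b.eval w)| ≤
          |a.eval v - a.eval w| + |b.eval v - b.eval w| := by
        calc |(a.eval v + b.eval v) - (a.eval w + b.eval w)|
            = |(a.eval v - a.eval w) + (b.eval v - b.eval w)| := by ring_nf
          _ ≤ _ := abs_add_le _ _
      have := h1.trans (h2.trans (add_le_add iha ihb))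
      simp only [MVTerm.eval, MVTerm.vsize]
      push_cast
      linarith

/-- If an equation fails in the standard MV algebra `[0,1]` under some
assignment, then it fails under some rational assignment. -/
theorem stmt5 (t s : MVTerm)
    (h : ∃ v : ℕ → ℝ, (∀ n, v n ∈ Set.Icc (0:ℝ) 1) ∧ t.eval v ≠ s.eval v) :
    ∃ w : ℕ → ℚ, (∀ n, ((w n : ℝ)) ∈ Set.Icc (0:ℝ) 1) ∧
      t.eval (fun n => (w n : ℝ)) ≠ s.eval (fun n => (w n : ℝ)) := by
  obtain ⟨v, hv, hne⟩ := h
  set ε : ℝ := |t.eval v - s.eval v| with hε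
  have hεpos : 0 < ε := abs_pos.mpr (sub_ne_zero.mpr hne)
  set δ : ℝ := ε / (2 * (t.vsize + s.vsize + 1)) with hδ
  have hden : (0:ℝ) < 2 * (t.vsize + s.vsize + 1) := by positivity
  have hδpos : 0 < δ := div_pos hεpos hden
  -- choose rational approximations
  have hex : ∀ n, ∃ q : ℚ, |v n - (q:ℝ)| < δ := fun n => exists_rat_near (v n) hδpos
  choose r hr using hex
  set w : ℕ → ℚ := fun n => max 0 (min 1 (r n)) with hw
  have hwcast : ∀ n, ((w n : ℝ)) = max 0 (min 1 ((r n : ℝ))) := by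
    intro n
    rw [hw]
    push_cast
    rfl
  have hwIcc : ∀ n, ((w n : ℝ)) ∈ Set.Icc (0:ℝ) 1 := by
    intro n
    rw [hwcast]
    constructor
    · exact le_max_left _ _
    · exact max_le (by norm_num) (min_le_left _ _)
  have hclose : ∀ n, |v n - (w n : ℝ)| ≤ δ := by
    intro n
    have hvn := hv n
    have hvfix : v n = max 0 (min 1 (v n)) := by
      rw [min_eq_right hvn.2, max_eq_right hvn.1]
    have hwcast : ((w n : ℝ)) = max 0 (min 1 ((r n : ℝ))) := hwcast n
    calc |v n - (w n : ℝ)| = |max 0 (min 1 (v n)) - max 0 (min 1 ((r n : ℝ)))| := by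
          rw [hwcast, ← hvfix]
      _ ≤ |min 1 (v n) - min 1 ((r n : ℝ))| := abs_max_sub_max_le _ _ _
      _ ≤ |v n - (r n : ℝ)| := abs_min_sub_min_le _ _ _
      _ ≤ δ := (hr n).le
  refine ⟨w, hwIcc, ?_⟩
  intro heq
  have ht := eval_lipschitz v (fun n => (w n : ℝ)) δ hclose t
  have hs := eval_lipschitz v (fun n => (w n : ℝ)) δ hclose s
  have hbound : ε ≤ (t.vsize + s.vsize : ℝ) * δ := by
    have : t.eval v - s.eval v =
        (t.eval v - t.eval (fun n => (w n : ℝ))) - (s.eval v - s.eval (fun n => (w n : ℝ)))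
          + (t.eval (fun n => (w n : ℝ)) - s.eval (fun n => (w n : ℝ))) := by ring
    set A := t.eval v - t.eval (fun n => (w n : ℝ)) with hA
    set B := s.eval v - s.eval (fun n => (w n : ℝ)) with hB
    have key : t.eval v - s.eval v = A - B := by rw [hA, hB]; linarith [heq]
    rw [hε, key]
    calc |A - B| = |A + (-B)| := by rw [sub_eq_add_neg]
      _ ≤ |A| + |(-B)| := abs_add_le _ _
      _ = |A| + |B| := by rw [abs_neg]
      _ ≤ (t.vsize : ℝ) * δ + (s.vsize : ℝ) * δ := add_le_add ht hs
      _ = (t.vsize + s.vsize : ℝ) * δ := by ring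
  have : (t.vsize + s.vsize : ℝ) * δ < ε := by
    rw [hδ]
    have : (t.vsize + s.vsize : ℝ) / (2 * (t.vsize + s.vsize + 1)) < 1 := by
      rw [div_lt_one hden]; linarith
    calc (t.vsize + s.vsize : ℝ) * (ε / (2 * (t.vsize + s.vsize + 1)))
        = ((t.vsize + s.vsize : ℝ) / (2 * (t.vsize + s.vsize + 1))) * ε := by ring
      _ < 1 * ε := by exact mul_lt_mul_of_pos_right this hεpos
      _ = ε := one_mul ε
  linarith
end

section
/- For each integer m ≥ 1 and n ∈ ℤ, the function e_{m,n}(x) = max(0, min(1, m x + n)) on [0,1] can be obtained from the identity function by finitely many applications of the operations f ↦ 1 - f and (f, g) ↦ min(1, f + g); more precisely, e_{m,n} belongs to the involutive submonoid of McNaughton functions generated by the identity. -/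
/-- The involutive submonoid of functions `[0,1] → [0,1]` generated by the
identity function under the operations `f ↦ 1 - f` and
`(f, g) ↦ min 1 (f + g)`. -/
inductive MVGen : (ℝ → ℝ) → Prop
  | id : MVGen (fun x => x)
  | star (f : ℝ → ℝ) : MVGen f → MVGen (fun x => 1 - f x)
  | oplus (f g : ℝ → ℝ) : MVGen f → MVGen g → MVGen (fun x => min 1 (f x + g x))

lemma MVGen.odot (f g : ℝ → ℝ) (hf : MVGen f) (hg : MVGen g) :
    MVGen (fun x => max 0 (f x + g x - 1)) := by
  have h := MVGen.star _ (MVGen.oplus _ _ (MVGen.star f hf) (MVGen.star g hg))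
  have : (fun x => 1 - min 1 ((1 - f x) + (1 - g x))) = fun x => max 0 (f x + g x - 1) := by
    funext x
    rcases le_total (f x + g x) 1 with h1 | h1
    · rw [min_eq_left (by linarith), max_eq_left (by linarith)]; ring
    · rw [min_eq_right (by linarith), max_eq_right (by linarith)]; ring
  rwa [this] at h

lemma key (x t : ℝ) (hx0 : 0 ≤ x) (hx1 : x ≤ 1) :
    max 0 (min 1 (max 0 (min 1 t) + x) + max 0 (min 1 (t + 1)) - 1)
      = max 0 (min 1 (t + x)) := by
  simp only [max_def, min_def]
  split_ifs <;> linarith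

lemma aux (k : ℕ) : ∀ n : ℤ, ∃ g : ℝ → ℝ, MVGen g ∧
    ∀ x ∈ Set.Icc (0:ℝ) 1, g x = max 0 (min 1 (((k:ℝ) + 1) * x + (n : ℝ))) := by
  induction k with
  | zero =>
      intro n
      rcases lt_trichotomy n 0 with hn | hn | hn
      · refine ⟨fun x => 1 - min 1 (x + (1 - x)), MVGen.star _ (MVGen.oplus _ _ MVGen.id (MVGen.star _ MVGen.id)), ?_⟩
        intro x hx
        have hn' : (n : ℝ) ≤ -1 := by exact_mod_cast (by omega : n ≤ -1)
        have hx1 : x ≤ 1 := hx.2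
        dsimp only
        rw [show x + (1 - x) = 1 by ring, min_self,
          min_eq_right (by push_cast; linarith), max_eq_left (by push_cast; linarith)]
        norm_num
      · refine ⟨fun x => x, MVGen.id, ?_⟩
        intro x hx
        subst hn
        push_cast
        rw [show (0:ℝ)+1 = 1 by norm_num, one_mul, add_zero,
          min_eq_right hx.2, max_eq_right hx.1]
      · refine ⟨fun x => min 1 (x + (1 - x)), MVGen.oplus _ _ MVGen.id (MVGen.star _ MVGen.id), ?_⟩
        intro x hx
        have hn' : (1:ℝ) ≤ n := by exact_mod_cast hn
        have hx0 : 0 ≤ x := hx.1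
        dsimp only
        rw [show x + (1 - x) = 1 by ring, min_self,
          min_eq_left (by push_cast; linarith), max_eq_right (by norm_num)]
  | succ k ih =>
      intro n
      obtain ⟨A, hA, hAe⟩ := ih n
      obtain ⟨B, hB, hBe⟩ := ih (n + 1)
      refine ⟨fun x => max 0 (min 1 (A x + x) + B x - 1),
        MVGen.odot _ _ (MVGen.oplus _ _ hA MVGen.id) hB, ?_⟩
      intro x hx
      dsimp only
      rw [hAe x hx, hBe x hx]
      push_cast
      have := key x (((k:ℝ) + 1) * x + n) hx.1 hx.2
      rw [show ((k:ℝ) + 1 + 1) * x + n = (((k:ℝ)+1) * x + n) + x by ring,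
          show ((k:ℝ) + 1) * x + (n + 1) = (((k:ℝ)+1) * x + n) + 1 by ring]
      exact this


/-- For integers `m ≥ 1` and `n`, the function
`e_{m,n} x = max 0 (min 1 (m x + n))` belongs (as a function on `[0,1]`) to
the involutive submonoid generated by the identity. -/
theorem stmt15 (m : ℤ) (hm : 1 ≤ m) (n : ℤ) :
    ∃ g : ℝ → ℝ, MVGen g ∧
      ∀ x ∈ Set.Icc (0:ℝ) 1, g x = max 0 (min 1 ((m : ℝ) * x + (n : ℝ))) := by
  obtain ⟨g, hg, he⟩ := aux (m - 1).toNat n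
  refine ⟨g, hg, fun x hx => ?_⟩
  rw [he x hx]
  congr 2
  have : ((m - 1).toNat : ℤ) = m - 1 := Int.toNat_of_nonneg (by omega)
  have : ((m - 1).toNat : ℝ) = (m : ℝ) - 1 := by exact_mod_cast this
  rw [this]; ring
end

section
/- Let θ ∈ [0,1] be irrational and let gen(θ) be the MV subalgebra of the standard MV algebra [0,1] generated by θ. Then the only MV-algebra automorphism of gen(θ) is the identity. -/
/-- The MV subalgebra `gen θ` of the standard MV algebra `[0,1]` generated
by `θ`: the smallest subset of `[0,1]` containing `0` and `θ` and closed
under `x ↦ 1 - x` and `(x, y) ↦ min 1 (x + y)`. -/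
inductive MVSubGen (θ : ℝ) : ℝ → Prop
  | zero : MVSubGen θ 0
  | gen : MVSubGen θ θ
  | star (x : ℝ) : MVSubGen θ x → MVSubGen θ (1 - x)
  | oplus (x y : ℝ) : MVSubGen θ x → MVSubGen θ y → MVSubGen θ (min 1 (x + y))

namespace MVAux

lemma mem_Icc {θ : ℝ} (hθ : θ ∈ Set.Icc (0:ℝ) 1) {x : ℝ} (hx : MVSubGen θ x) :
    x ∈ Set.Icc (0:ℝ) 1 := by
  induction hx with
  | zero => simp
  | gen => exact hθ
  | star x hx ih => exact ⟨by linarith [ih.2], by linarith [ih.1]⟩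
  | oplus x y hx hy ihx ihy =>
      exact ⟨le_min one_pos.le (by linarith [ihx.1, ihy.1]), min_le_left _ _⟩

lemma one_mem (θ : ℝ) : MVSubGen θ 1 := by
  have h := MVSubGen.star (θ := θ) 0 MVSubGen.zero
  norm_num at h; exact h

lemma fract_nat_mem {θ : ℝ} (hθ : θ ∈ Set.Icc (0:ℝ) 1) (hirr : Irrational θ) :
    ∀ n : ℕ, 1 ≤ n → MVSubGen θ (Int.fract (n * θ)) := by
  have hθ0 : 0 < θ := lt_of_le_of_ne hθ.1 (Ne.symm hirr.ne_zero)
  have hθ1 : θ < 1 := lt_of_le_of_ne hθ.2 (by exact_mod_cast hirr.ne_nat 1)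
  intro n hn
  induction n with
  | zero => omega
  | succ m ih =>
      rcases Nat.eq_or_lt_of_le hn with h1 | h1
      · have h0 : (m : ℕ) = 0 := by omega
        subst h0
        have : ((0 + 1 : ℕ) : ℝ) * θ = θ := by norm_num
        rw [this, Int.fract_eq_self.mpr ⟨hθ0.le, hθ1⟩]
        exact MVSubGen.gen
      · have hm : 1 ≤ m := by omega
        have hx := ih hm
        set x := Int.fract ((m : ℝ) * θ) with hxdef
        have hx0 : 0 ≤ x := Int.fract_nonneg _
        have hx1 : x < 1 := Int.fract_lt_one _
        have hfl : ((m : ℝ) * θ) - x = (⌊(m : ℝ) * θ⌋ : ℝ) := by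
          rw [hxdef, Int.fract]; ring
        have hne1 : x + θ ≠ 1 := by
          intro h
          have hI : Irrational ((((m:ℤ)+1) : ℤ) * θ) := hirr.intCast_mul (by omega)
          exact hI.ne_int (⌊(m : ℝ) * θ⌋ + 1) (by push_cast; linarith [hfl])
        rcases lt_or_gt_of_ne hne1 with hlt | hgt
        · have hmem : MVSubGen θ (min 1 (x + θ)) := MVSubGen.oplus _ _ hx MVSubGen.gen
          have heq : Int.fract (((m+1 : ℕ) : ℝ) * θ) = min 1 (x + θ) := by
            rw [min_eq_right hlt.le, Int.fract_eq_iff]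
            refine ⟨by positivity, hlt, ⟨⌊(m : ℝ) * θ⌋, ?_⟩⟩
            push_cast; linarith [hfl]
          rw [heq]; exact hmem
        · have hmem : MVSubGen θ (1 - min 1 ((1 - x) + (1 - θ))) :=
            MVSubGen.star _ (MVSubGen.oplus _ _ (MVSubGen.star _ hx) (MVSubGen.star _ MVSubGen.gen))
          have hmin : min 1 ((1 - x) + (1 - θ)) = 2 - x - θ := by
            rw [min_eq_right (by linarith)]; ring
          have heq : Int.fract (((m+1 : ℕ) : ℝ) * θ) = 1 - min 1 ((1 - x) + (1 - θ)) := by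
            rw [hmin, Int.fract_eq_iff]
            refine ⟨by linarith, by linarith, ⟨⌊(m : ℝ) * θ⌋ + 1, ?_⟩⟩
            push_cast; linarith [hfl]
          rw [heq]; exact hmem

lemma fract_int_mem {θ : ℝ} (hθ : θ ∈ Set.Icc (0:ℝ) 1) (hirr : Irrational θ) :
    ∀ n : ℤ, n ≠ 0 → MVSubGen θ (Int.fract (n * θ)) := by
  intro n hn
  rcases lt_or_gt_of_ne hn with hneg | hpos
  · have hmem := fract_nat_mem hθ hirr (-n).toNat (by omega)
    have hcast : (((-n).toNat : ℝ)) = -(n : ℝ) := by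
      have : ((-n).toNat : ℤ) = -n := Int.toNat_of_nonneg (by omega)
      exact_mod_cast this
    rw [hcast] at hmem
    have hfr : Int.fract (-((n:ℝ) * θ)) ≠ 0 := by
      intro h
      have : Irrational ((-n : ℤ) * θ) := hirr.intCast_mul (by omega)
      have h2 := this.sub_intCast ⌊-((n:ℝ) * θ)⌋
      rw [show ((-n : ℤ) : ℝ) * θ = -((n:ℝ)*θ) by push_cast; ring] at h2
      exact h2.ne_zero (by rw [← Int.self_sub_floor] at h; exact h)
    have hfn := Int.fract_neg (x := -((n:ℝ) * θ)) hfr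
    rw [neg_neg] at hfn
    rw [hfn]
    rw [neg_mul] at hmem
    exact MVSubGen.star _ hmem
  · have hmem := fract_nat_mem hθ hirr n.toNat (by omega)
    have hcast : ((n.toNat : ℝ)) = (n : ℝ) := by
      exact_mod_cast congrArg (Int.cast : ℤ → ℝ) (Int.toNat_of_nonneg (by omega))
    rwa [hcast] at hmem

lemma exists_small {θ : ℝ} (hθ : θ ∈ Set.Icc (0:ℝ) 1) (hirr : Irrational θ) :
    ∀ δ : ℝ, 0 < δ → ∃ x, MVSubGen θ x ∧ 0 < x ∧ x < δ := by
  intro δ hδ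
  set G := AddSubgroup.closure ({1, θ} : Set ℝ) with hG
  rcases AddSubgroup.dense_or_cyclic G with hdense | ⟨a, ha⟩
  · have hopen : IsOpen (Set.Ioo (0:ℝ) (min δ 1)) := isOpen_Ioo
    have hne : (Set.Ioo (0:ℝ) (min δ 1)).Nonempty := by
      refine ⟨min δ 1 / 2, by positivity, by
        have : (0:ℝ) < min δ 1 := lt_min hδ one_pos
        linarith⟩
    obtain ⟨g, hgG, hg⟩ := hdense.exists_mem_open hopen hne
    have hmem : g ∈ AddSubgroup.closure ({1, θ} : Set ℝ) := hgG
    rw [AddSubgroup.mem_closure_pair] at hmem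
    obtain ⟨p, q, hpq⟩ := hmem
    have hq0 : q ≠ 0 := by
      intro h
      rw [h] at hpq
      simp at hpq
      have h0 : (0:ℝ) < (p:ℝ) := by rw [hpq]; exact hg.1
      have h1 : (p:ℝ) < 1 := lt_of_lt_of_le (hpq ▸ hg.2) (min_le_right _ _)
      have : (0:ℤ) < p := by exact_mod_cast h0
      have : (1:ℝ) ≤ (p:ℝ) := by exact_mod_cast this
      linarith
    refine ⟨g, ?_, hg.1, lt_of_lt_of_le hg.2 (min_le_left _ _)⟩
    have : Int.fract ((q:ℝ) * θ) = g := by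
      rw [Int.fract_eq_iff]
      refine ⟨hg.1.le, lt_of_lt_of_le hg.2 (min_le_right _ _), ⟨-p, ?_⟩⟩
      simp only [zsmul_eq_mul, mul_one] at hpq
      push_cast
      linarith
    rw [← this]
    exact fract_int_mem hθ hirr q hq0
  · exfalso
    have h1 : (1:ℝ) ∈ G := AddSubgroup.subset_closure (by simp)
    have h2 : θ ∈ G := AddSubgroup.subset_closure (by simp)
    rw [ha, AddSubgroup.mem_closure_singleton] at h1 h2
    obtain ⟨p, hp⟩ := h1
    obtain ⟨q, hq⟩ := h2
    have hpa : (p:ℝ) * a = 1 := by simpa [zsmul_eq_mul] using hp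
    have hqa : (q:ℝ) * a = θ := by simpa [zsmul_eq_mul] using hq
    have hp0 : (p:ℝ) ≠ 0 := by
      intro h; rw [h, zero_mul] at hpa; exact zero_ne_one hpa
    refine hirr ⟨(q : ℚ) / (p : ℚ), ?_⟩
    push_cast
    rw [div_eq_iff hp0]
    have hkey : (q:ℝ) * ((p:ℝ) * a) = (p:ℝ) * ((q:ℝ) * a) := by ring
    rw [hpa, hqa] at hkey
    linarith

end MVAux

namespace MVAux

section Phi

variable {θ : ℝ} {φ : ℝ → ℝ}

lemma phi_one (hzero : φ 0 = 0) (hstar : ∀ x, MVSubGen θ x → φ (1 - x) = 1 - φ x) :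
    φ 1 = 1 := by
  have h := hstar 0 MVSubGen.zero
  rw [hzero] at h
  simpa using h

lemma phi_mono (hzero : φ 0 = 0) (hstar : ∀ x, MVSubGen θ x → φ (1 - x) = 1 - φ x)
    (hoplus : ∀ x y, MVSubGen θ x → MVSubGen θ y →
      φ (min 1 (x + y)) = min 1 (φ x + φ y)) :
    ∀ x y, MVSubGen θ x → MVSubGen θ y → x ≤ y → φ x ≤ φ y := by
  intro x y hx hy hxy
  have h := hoplus (1 - x) y (MVSubGen.star _ hx) hy
  rw [hstar x hx, min_eq_left (by linarith), phi_one hzero hstar] at h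
  have h2 : (1:ℝ) ≤ 1 - φ x + φ y := h.le.trans (min_le_right 1 (1 - φ x + φ y))
  linarith

lemma phi_add (hθ : θ ∈ Set.Icc (0:ℝ) 1)
    (hzero : φ 0 = 0) (hstar : ∀ x, MVSubGen θ x → φ (1 - x) = 1 - φ x)
    (hoplus : ∀ x y, MVSubGen θ x → MVSubGen θ y →
      φ (min 1 (x + y)) = min 1 (φ x + φ y)) :
    ∀ x y, MVSubGen θ x → MVSubGen θ y → x + y ≤ 1 → φ (x + y) = φ x + φ y := by
  intro x y hx hy hxy
  have h1 : φ x ≤ φ (1 - y) :=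
    phi_mono hzero hstar hoplus x (1 - y) hx (MVSubGen.star _ hy) (by linarith)
  rw [hstar y hy] at h1
  have h := hoplus x y hx hy
  rw [min_eq_right hxy, min_eq_right (by linarith)] at h
  exact h

lemma phi_nsmul (hθ : θ ∈ Set.Icc (0:ℝ) 1)
    (hzero : φ 0 = 0) (hstar : ∀ x, MVSubGen θ x → φ (1 - x) = 1 - φ x)
    (hoplus : ∀ x y, MVSubGen θ x → MVSubGen θ y →
      φ (min 1 (x + y)) = min 1 (φ x + φ y)) :
    ∀ k : ℕ, ∀ x, MVSubGen θ x → 0 ≤ x → (k : ℝ) * x ≤ 1 →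
      MVSubGen θ ((k : ℝ) * x) ∧ φ ((k : ℝ) * x) = (k : ℝ) * φ x := by
  intro k
  induction k with
  | zero =>
      intro x hx hx0 hk
      simp only [Nat.cast_zero, zero_mul]
      exact ⟨MVSubGen.zero, by simp [hzero]⟩
  | succ k ih =>
      intro x hx hx0 hk
      have hle : (k : ℝ) * x ≤ ((k+1 : ℕ) : ℝ) * x := by
        push_cast; nlinarith
      have hk' : (k : ℝ) * x ≤ 1 := le_trans hle hk
      obtain ⟨hmem, hφ⟩ := ih x hx hx0 hk'
      have hsum : ((k+1 : ℕ) : ℝ) * x = (k : ℝ) * x + x := by push_cast; ring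
      have hsum1 : (k : ℝ) * x + x ≤ 1 := by rw [← hsum]; exact hk
      constructor
      · have := MVSubGen.oplus _ _ hmem hx
        rw [min_eq_right hsum1] at this
        rw [hsum]; exact this
      · rw [hsum, phi_add hθ hzero hstar hoplus _ _ hmem hx hsum1, hφ]
        push_cast; ring

lemma phi_small_lt (hθ : θ ∈ Set.Icc (0:ℝ) 1)
    (hmaps : ∀ x, MVSubGen θ x → MVSubGen θ (φ x))
    (hzero : φ 0 = 0) (hstar : ∀ x, MVSubGen θ x → φ (1 - x) = 1 - φ x)
    (hoplus : ∀ x y, MVSubGen θ x → MVSubGen θ y →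
      φ (min 1 (x + y)) = min 1 (φ x + φ y))
    {a : ℝ} (ha : MVSubGen θ a) (hlt : a < φ a) :
    ∀ x, MVSubGen θ x → 0 < x → x ≤ (φ a - a) / 2 → x < φ x := by
  intro x hx hx0 hxs
  set ε := φ a - a with hεdef
  have hε : 0 < ε := by simp [hεdef]; linarith
  have haI := mem_Icc hθ ha
  have hφaI := mem_Icc hθ (hmaps a ha)
  set k : ℕ := ⌊a / x⌋₊ + 1 with hkdef
  have hk0 : (0:ℝ) < (k : ℝ) := by exact_mod_cast Nat.succ_pos ⌊a / x⌋₊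
  have hak : a < (k : ℝ) * x := by
    have h := Nat.lt_floor_add_one (a / x)
    have : a / x < (k : ℝ) := by rw [hkdef]; push_cast; linarith
    calc a = (a / x) * x := by field_simp
    _ < (k : ℝ) * x := by apply mul_lt_mul_of_pos_right this hx0
  have hka : (k : ℝ) * x ≤ a + x := by
    have h := Nat.floor_le (a := a / x) (div_nonneg haI.1 hx0.le)
    have : (⌊a / x⌋₊ : ℝ) * x ≤ a := by
      calc (⌊a / x⌋₊ : ℝ) * x ≤ (a / x) * x := mul_le_mul_of_nonneg_right h hx0.le
      _ = a := by field_simp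
    rw [hkdef]; push_cast; linarith
  have hk1 : (k : ℝ) * x ≤ 1 := by
    have : a + ε ≤ 1 := by rw [hεdef]; linarith [hφaI.2]
    linarith
  obtain ⟨hkmem, hkφ⟩ := phi_nsmul hθ hzero hstar hoplus k x hx hx0.le hk1
  have hmono : φ a ≤ φ ((k : ℝ) * x) :=
    phi_mono hzero hstar hoplus a _ ha hkmem hak.le
  rw [hkφ] at hmono
  have hkey : (k : ℝ) * x < (k : ℝ) * φ x := by
    have h1 : ε = φ a - a := hεdef
    linarith [hmono, hka, hxs, hak]
  exact lt_of_mul_lt_mul_left hkey hk0.le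

lemma phi_lt_two (hθ : θ ∈ Set.Icc (0:ℝ) 1)
    (hmaps : ∀ x, MVSubGen θ x → MVSubGen θ (φ x))
    (hzero : φ 0 = 0) (hstar : ∀ x, MVSubGen θ x → φ (1 - x) = 1 - φ x)
    (hoplus : ∀ x y, MVSubGen θ x → MVSubGen θ y →
      φ (min 1 (x + y)) = min 1 (φ x + φ y))
    {x : ℝ} (hx : MVSubGen θ x) (hx0 : 0 < x) (hx2 : x ≤ 1/2) :
    φ x < 2 * x := by
  set m : ℕ := ⌊1 / x⌋₊ with hmdef
  have hmle : (m : ℝ) ≤ 1 / x := Nat.floor_le (by positivity)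
  have hmx : (m : ℝ) * x ≤ 1 := by
    calc (m : ℝ) * x ≤ (1 / x) * x := mul_le_mul_of_nonneg_right hmle hx0.le
    _ = 1 := by field_simp
  have hmgt : 1 / x < (m : ℝ) + 1 := by
    have := Nat.lt_floor_add_one (1 / x)
    push_cast at this ⊢; linarith
  have hxinv : (2:ℝ) ≤ 1 / x := by
    rw [le_div_iff₀ hx0]; linarith
  have hm2 : 1 / (2 * x) < (m : ℝ) := by
    have h1 : 1 / (2 * x) = (1 / x) / 2 := by field_simp
    linarith [hmgt, hxinv, h1 ▸ (by linarith : 1 / x - 1 ≥ 1/x/2)]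
  have hm0 : (0:ℝ) < (m : ℝ) := lt_trans (by positivity) hm2
  obtain ⟨hmmem, hmφ⟩ := phi_nsmul hθ hzero hstar hoplus m x hx hx0.le hmx
  have hb : φ ((m : ℝ) * x) ≤ 1 := (mem_Icc hθ (hmaps _ hmmem)).2
  rw [hmφ] at hb
  have h2 : (1:ℝ) < (m : ℝ) * (2 * x) := by
    rw [div_lt_iff₀ (by positivity)] at hm2
    linarith
  have : (m : ℝ) * φ x < (m : ℝ) * (2 * x) := lt_of_le_of_lt hb h2
  exact lt_of_mul_lt_mul_left this hm0.le

end Phi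

end MVAux


/-- For irrational `θ ∈ [0,1]`, the only MV-algebra automorphism of
`gen θ` is the identity. -/
theorem stmt18 (θ : ℝ) (hθ : θ ∈ Set.Icc (0:ℝ) 1) (hirr : Irrational θ)
    (φ : ℝ → ℝ)
    (hbij : Set.BijOn φ {x | MVSubGen θ x} {x | MVSubGen θ x})
    (hzero : φ 0 = 0)
    (hstar : ∀ x, MVSubGen θ x → φ (1 - x) = 1 - φ x)
    (hoplus : ∀ x y, MVSubGen θ x → MVSubGen θ y →
      φ (min 1 (x + y)) = min 1 (φ x + φ y)) :
    ∀ x, MVSubGen θ x → φ x = x := by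
  classical
  intro x hx
  by_contra hne
  have hmaps : ∀ z, MVSubGen θ z → MVSubGen θ (φ z) := fun z hz => hbij.mapsTo hz
  obtain ⟨a, ha, halt⟩ : ∃ a, MVSubGen θ a ∧ a < φ a := by
    rcases lt_or_gt_of_ne hne with h | h
    · refine ⟨1 - x, MVSubGen.star _ hx, ?_⟩
      rw [hstar x hx]; linarith
    · exact ⟨x, hx, h⟩
  set S : Set ℝ := {x | MVSubGen θ x} with hSdef
  set ψ := Function.invFunOn φ S with hψdef
  have hinv : Set.InvOn ψ φ S S := hbij.invOn_invFunOn
  have hleft : ∀ z, MVSubGen θ z → ψ (φ z) = z := fun z hz => hinv.1 hz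
  have hψmaps : ∀ y, MVSubGen θ y → MVSubGen θ (ψ y) := by
    intro y hy
    obtain ⟨z, hz, hzy⟩ := hbij.surjOn hy
    have : ψ y = z := by rw [← hzy]; exact hleft z hz
    rw [this]; exact hz
  have hψzero : ψ 0 = 0 := by
    have h0 : ψ (φ 0) = 0 := hleft 0 MVSubGen.zero
    rwa [hzero] at h0
  have hψstar : ∀ y, MVSubGen θ y → ψ (1 - y) = 1 - ψ y := by
    intro y hy
    have hz : MVSubGen θ (ψ y) := hψmaps y hy
    have hzy : φ (ψ y) = y := hinv.2 hy
    have h1 : φ (1 - ψ y) = 1 - y := by rw [hstar _ hz, hzy]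
    have := hleft (1 - ψ y) (MVSubGen.star _ hz)
    rwa [h1] at this
  have hψoplus : ∀ y₁ y₂, MVSubGen θ y₁ → MVSubGen θ y₂ →
      ψ (min 1 (y₁ + y₂)) = min 1 (ψ y₁ + ψ y₂) := by
    intro y₁ y₂ hy₁ hy₂
    have hz₁ : MVSubGen θ (ψ y₁) := hψmaps y₁ hy₁
    have hz₂ : MVSubGen θ (ψ y₂) := hψmaps y₂ hy₂
    have h1 : φ (min 1 (ψ y₁ + ψ y₂)) = min 1 (y₁ + y₂) := by
      rw [hoplus _ _ hz₁ hz₂, hinv.2 hy₁, hinv.2 hy₂]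
    have := hleft (min 1 (ψ y₁ + ψ y₂)) (MVSubGen.oplus _ _ hz₁ hz₂)
    rwa [h1] at this
  -- the element where ψ strictly increases, with the same gap
  set a' : ℝ := 1 - φ a with ha'def
  have ha' : MVSubGen θ a' := MVSubGen.star _ (hmaps a ha)
  have hψa' : ψ a' = 1 - a := by
    have h1 : φ (1 - a) = a' := by rw [hstar a ha]
    have := hleft (1 - a) (MVSubGen.star _ ha)
    rwa [h1] at this
  have ha'lt : a' < ψ a' := by rw [hψa', ha'def]; linarith
  have hgap : ψ a' - a' = φ a - a := by rw [hψa', ha'def]; ring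
  -- pick a small element
  set ε : ℝ := φ a - a with hεdef
  have hε : 0 < ε := by rw [hεdef]; linarith
  obtain ⟨x₀, hx₀mem, hx₀0, hx₀lt⟩ :=
    MVAux.exists_small hθ hirr (min (ε/4) (1/2)) (by positivity)
  have hx₀ε : x₀ < ε/4 := lt_of_lt_of_le hx₀lt (min_le_left _ _)
  have hx₀half : x₀ ≤ 1/2 := le_of_lt (lt_of_lt_of_le hx₀lt (min_le_right _ _))
  -- φ strictly increases x₀
  have hstep1 : x₀ < φ x₀ :=
    MVAux.phi_small_lt hθ hmaps hzero hstar hoplus ha halt x₀ hx₀mem hx₀0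
      (by rw [← hεdef]; linarith)
  -- φ x₀ is still small
  have hstep2 : φ x₀ < 2 * x₀ :=
    MVAux.phi_lt_two hθ hmaps hzero hstar hoplus hx₀mem hx₀0 hx₀half
  -- ψ strictly increases φ x₀
  have hstep3 : φ x₀ < ψ (φ x₀) :=
    MVAux.phi_small_lt hθ hψmaps hψzero hψstar hψoplus ha' ha'lt (φ x₀)
      (hmaps x₀ hx₀mem) (by linarith) (by rw [hgap]; linarith)
  rw [hleft x₀ hx₀mem] at hstep3
  linarith
end

section
/- Let θ ∈ (0,1) be irrational. The set 𝔧_θ = { f McNaughton : f(θ) = 0 } is a maximal ideal of the MV algebra of McNaughton functions: it is closed under ⊕, downward closed, does not contain the constant 1, and any ideal strictly containing 𝔧_θ contains the constant function 1. -/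
lemma sortS (S : Finset ℝ) (h0 : (0:ℝ) ∈ S) (h1 : (1:ℝ) ∈ S)
    (hS : ∀ s ∈ S, s ∈ Set.Icc (0:ℝ) 1) :
    ∃ (N : ℕ) (e : Fin (N + 1) → ℝ), e 0 = 0 ∧ e (Fin.last N) = 1 ∧
      StrictMono e ∧ (∀ i, e i ∈ S) ∧
      ∀ (i : Fin N) (s : ℝ), s ∈ S → s ∉ Set.Ioo (e (Fin.castSucc i)) (e i.succ) := by
  have hpos : 0 < S.card := Finset.card_pos.2 ⟨0, h0⟩
  have hcard : S.card = (S.card - 1) + 1 := (Nat.succ_pred_eq_of_pos hpos).symm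
  set N := S.card - 1 with hN
  let e : Fin (N + 1) → ℝ := fun i => S.orderEmbOfFin hcard i
  have hsm : StrictMono e := (S.orderEmbOfFin hcard).strictMono
  have hmem : ∀ i, e i ∈ S := fun i => S.orderEmbOfFin_mem hcard i
  have hsurj : ∀ s ∈ S, ∃ t, e t = s := by
    intro s hs
    have : s ∈ Set.range (S.orderEmbOfFin hcard) := by
      rw [Finset.range_orderEmbOfFin]; exact hs
    exact this
  have he0 : e 0 = 0 := by
    obtain ⟨t, ht⟩ := hsurj 0 h0
    have h1' : e 0 ≤ e t := hsm.monotone (Fin.zero_le t)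
    have h2' : (0:ℝ) ≤ e 0 := (hS _ (hmem 0)).1
    rw [ht] at h1'; linarith
  have heL : e (Fin.last N) = 1 := by
    obtain ⟨t, ht⟩ := hsurj 1 h1
    have h1' : e t ≤ e (Fin.last N) := hsm.monotone (Fin.le_last t)
    have h2' : e (Fin.last N) ≤ 1 := (hS _ (hmem _)).2
    rw [ht] at h1'; linarith
  refine ⟨N, e, he0, heL, hsm, hmem, ?_⟩
  rintro i s hs ⟨hlt1, hlt2⟩
  obtain ⟨t, ht⟩ := hsurj s hs
  rw [← ht] at hlt1 hlt2
  have g1 : (i : ℕ) < (t : ℕ) := hsm.lt_iff_lt.1 hlt1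
  have g2 : (t : ℕ) < (i : ℕ) + 1 := hsm.lt_iff_lt.1 hlt2
  omega

lemma between {n : ℕ} {c : Fin (n+1) → ℝ} (hc0 : c 0 = 0) (hc1 : c (Fin.last n) = 1)
    {u v : ℝ} (hu : 0 ≤ u) (hv : v ≤ 1) (huv : u < v)
    (hgap : ∀ j : Fin (n+1), c j ∉ Set.Ioo u v) :
    ∃ j : Fin n, c (Fin.castSucc j) ≤ u ∧ v ≤ c j.succ := by
  classical
  set T : Finset (Fin (n+1)) := Finset.univ.filter (fun j => c j ≤ u) with hT
  have hne : T.Nonempty := ⟨0, by simp [hT, hc0, hu]⟩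
  set j0 := T.max' hne with hj0def
  have hj0T : j0 ∈ T := T.max'_mem hne
  have hj0 : c j0 ≤ u := by
    have := hj0T; rw [hT, Finset.mem_filter] at this; exact this.2
  have hj0lt : (j0 : ℕ) < n := by
    rcases lt_or_eq_of_le (Fin.le_last j0) with h | h
    · exact h
    · exfalso; rw [h, hc1] at hj0; linarith
  refine ⟨⟨(j0 : ℕ), hj0lt⟩, ?_, ?_⟩
  · have : Fin.castSucc (⟨(j0 : ℕ), hj0lt⟩ : Fin n) = j0 := by ext; simp
    rw [this]; exact hj0
  · set js := (⟨(j0 : ℕ), hj0lt⟩ : Fin n).succ with hjs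
    have hnotle : ¬ c js ≤ u := by
      intro h
      have hmemT : js ∈ T := by rw [hT, Finset.mem_filter]; exact ⟨Finset.mem_univ _, h⟩
      have hle := T.le_max' js hmemT
      rw [← hj0def] at hle
      have : (js : ℕ) ≤ (j0 : ℕ) := hle
      simp [hjs] at this
    have hgt : u < c js := lt_of_not_ge hnotle
    by_contra hvle
    exact hgap js ⟨hgt, lt_of_not_ge hvle⟩

lemma linle {a b u v x : ℝ} (hux : u ≤ x) (hxv : x ≤ v) :
    a * x + b ≤ max (a * u + b) (a * v + b) := by
  rcases le_total a 0 with ha | ha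
  · have : a * x ≤ a * u := mul_le_mul_of_nonpos_left hux ha
    exact le_max_of_le_left (by linarith)
  · have : a * x ≤ a * v := mul_le_mul_of_nonneg_left hxv ha
    exact le_max_of_le_right (by linarith)

lemma linge {a b u v x : ℝ} (hux : u ≤ x) (hxv : x ≤ v) :
    min (a * u + b) (a * v + b) ≤ a * x + b := by
  rcases le_total a 0 with ha | ha
  · have : a * v ≤ a * x := mul_le_mul_of_nonpos_left hxv ha
    exact min_le_of_right_le (by linarith)
  · have : a * u ≤ a * x := mul_le_mul_of_nonneg_left hux ha
    exact min_le_of_left_le (by linarith)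

lemma isPWLZ_min_add {f g : ℝ → ℝ} (hf : IsPWLZ f) (hg : IsPWLZ g) :
    IsPWLZ (fun x => min 1 (f x + g x)) := by
  classical
  obtain ⟨n, c, hc0, hc1, hcm, hcf⟩ := hf
  obtain ⟨m, d, hd0, hd1, hdm, hdf⟩ := hg
  have hcI : ∀ i, c i ∈ Set.Icc (0:ℝ) 1 := fun i =>
    ⟨hc0 ▸ hcm (Fin.zero_le i), hc1 ▸ hcm (Fin.le_last i)⟩
  have hdI : ∀ i, d i ∈ Set.Icc (0:ℝ) 1 := fun i =>
    ⟨hd0 ▸ hdm (Fin.zero_le i), hd1 ▸ hdm (Fin.le_last i)⟩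
  set S0 : Finset ℝ := Finset.univ.image c ∪ Finset.univ.image d with hS0def
  have hcS0 : ∀ i, c i ∈ S0 := fun i =>
    Finset.mem_union_left _ (Finset.mem_image_of_mem c (Finset.mem_univ i))
  have hdS0 : ∀ i, d i ∈ S0 := fun i =>
    Finset.mem_union_right _ (Finset.mem_image_of_mem d (Finset.mem_univ i))
  have h00 : (0:ℝ) ∈ S0 := hc0 ▸ hcS0 0
  have h01 : (1:ℝ) ∈ S0 := hc1 ▸ hcS0 (Fin.last n)
  have hS0I : ∀ s ∈ S0, s ∈ Set.Icc (0:ℝ) 1 := by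
    intro s hs
    rw [hS0def, Finset.mem_union] at hs
    rcases hs with hs | hs <;> obtain ⟨i, -, rfl⟩ := Finset.mem_image.1 hs
    · exact hcI i
    · exact hdI i
  obtain ⟨N, e, he0, heL, hesm, hemem, hegap⟩ := sortS S0 h00 h01 hS0I
  have heI : ∀ i, e i ∈ Set.Icc (0:ℝ) 1 := fun i => hS0I _ (hemem i)
  have hsum : ∀ i : Fin N, ∃ a b : ℤ, ∀ x ∈ Set.Icc (e i.castSucc) (e i.succ),
      f x + g x = (a:ℝ) * x + (b:ℝ) := by
    intro i
    have hu0 : (0:ℝ) ≤ e i.castSucc := (heI _).1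
    have hv1 : e i.succ ≤ 1 := (heI _).2
    have huv : e i.castSucc < e i.succ := hesm Fin.castSucc_lt_succ
    obtain ⟨j, hj1, hj2⟩ := between hc0 hc1 hu0 hv1 huv
      (fun j hin => hegap i (c j) (hcS0 j) hin)
    obtain ⟨j', hj1', hj2'⟩ := between hd0 hd1 hu0 hv1 huv
      (fun j hin => hegap i (d j) (hdS0 j) hin)
    obtain ⟨a1, b1, hab1⟩ := hcf j
    obtain ⟨a2, b2, hab2⟩ := hdf j'
    refine ⟨a1 + a2, b1 + b2, fun x hx => ?_⟩
    have hfx := hab1 x ⟨le_trans hj1 hx.1, le_trans hx.2 hj2⟩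
    have hgx := hab2 x ⟨le_trans hj1' hx.1, le_trans hx.2 hj2'⟩
    rw [hfx, hgx]; push_cast; ring
  choose A B hAB using hsum
  set t : Fin N → ℝ := fun i =>
    if A i = 0 then e i.castSucc
    else min (e i.succ) (max (e i.castSucc) ((1 - (B i : ℝ)) / (A i : ℝ))) with htdef
  have htI : ∀ i, t i ∈ Set.Icc (0:ℝ) 1 := by
    intro i
    rw [htdef]
    by_cases h : A i = 0
    · simp only [h, if_pos rfl]; exact heI _
    · simp only [if_neg h]
      constructor
      · exact le_min (heI _).1 (le_trans (heI _).1 (le_max_left _ _))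
      · exact le_trans (min_le_left _ _) (heI _).2
  set S1 : Finset ℝ := S0 ∪ Finset.univ.image t with hS1def
  have hS0S1 : ∀ s ∈ S0, s ∈ S1 := fun s hs => Finset.mem_union_left _ hs
  have htS1 : ∀ i, t i ∈ S1 := fun i =>
    Finset.mem_union_right _ (Finset.mem_image_of_mem t (Finset.mem_univ i))
  have h10 : (0:ℝ) ∈ S1 := hS0S1 _ h00
  have h11 : (1:ℝ) ∈ S1 := hS0S1 _ h01
  have hS1I : ∀ s ∈ S1, s ∈ Set.Icc (0:ℝ) 1 := by
    intro s hs
    rw [hS1def, Finset.mem_union] at hs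
    rcases hs with hs | hs
    · exact hS0I s hs
    · obtain ⟨i, -, rfl⟩ := Finset.mem_image.1 hs; exact htI i
  obtain ⟨N', e', he0', heL', hesm', hemem', hegap'⟩ := sortS S1 h10 h11 hS1I
  refine ⟨N', e', he0', heL', hesm'.monotone, ?_⟩
  intro i
  set u := e' i.castSucc with hu
  set v := e' i.succ with hv
  have huv : u < v := hesm' Fin.castSucc_lt_succ
  have hu0 : (0:ℝ) ≤ u := (hS1I _ (hemem' _)).1
  have hv1 : v ≤ 1 := (hS1I _ (hemem' _)).2
  obtain ⟨j, hj1, hj2⟩ := between he0 heL hu0 hv1 huv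
    (fun j hin => hegap' i (e j) (hS0S1 _ (hemem j)) hin)
  have hlin : ∀ x ∈ Set.Icc u v, f x + g x = (A j : ℝ) * x + (B j : ℝ) :=
    fun x hx => hAB j x ⟨le_trans hj1 hx.1, le_trans hx.2 hj2⟩
  set a : ℝ := (A j : ℝ) with hadef
  set b : ℝ := (B j : ℝ) with hbdef
  by_cases hca : a * u + b ≤ 1 ∧ a * v + b ≤ 1
  · refine ⟨A j, B j, fun x hx => ?_⟩
    show min 1 (f x + g x) = a * x + b
    rw [hlin x hx]
    exact min_eq_right (le_trans (linle hx.1 hx.2) (max_le hca.1 hca.2))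
  by_cases hcb : 1 ≤ a * u + b ∧ 1 ≤ a * v + b
  · refine ⟨0, 1, fun x hx => ?_⟩
    show min 1 (f x + g x) = ((0:ℤ):ℝ) * x + ((1:ℤ):ℝ)
    rw [hlin x hx, min_eq_left (le_trans (le_min hcb.1 hcb.2) (linge hx.1 hx.2))]
    push_cast; ring
  exfalso
  have hmix : (a * u + b < 1 ∧ 1 < a * v + b) ∨ (a * v + b < 1 ∧ 1 < a * u + b) := by
    rcases le_or_gt (a * u + b) 1 with hp | hp <;> rcases le_or_gt (a * v + b) 1 with hq | hq
    · exact absurd ⟨hp, hq⟩ hca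
    · exact Or.inl ⟨lt_of_le_of_ne hp (fun h => hcb ⟨le_of_eq h.symm, le_of_lt hq⟩), hq⟩
    · exact Or.inr ⟨lt_of_le_of_ne hq (fun h => hcb ⟨le_of_lt hp, le_of_eq h.symm⟩), hp⟩
    · exact absurd ⟨le_of_lt hp, le_of_lt hq⟩ hcb
  have ha0 : a ≠ 0 := by
    rcases hmix with ⟨h1, h2⟩ | ⟨h1, h2⟩ <;>
    · intro h; rw [h] at h1 h2; simp at h1 h2; linarith
  set ts : ℝ := (1 - b) / a with htsdef
  have hts : u < ts ∧ ts < v := by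
    rcases hmix with ⟨h1, h2⟩ | ⟨h1, h2⟩
    · have hapos : 0 < a := by
        rcases lt_or_ge 0 a with h | h
        · exact h
        · exfalso; nlinarith [mul_le_mul_of_nonpos_left (le_of_lt huv) h]
      constructor
      · rw [htsdef, lt_div_iff₀ hapos]; linarith [mul_comm u a]
      · rw [htsdef, div_lt_iff₀ hapos]; linarith [mul_comm v a]
    · have haneg : a < 0 := by
        rcases lt_or_ge a 0 with h | h
        · exact h
        · exfalso; nlinarith [mul_le_mul_of_nonneg_left (le_of_lt huv) h]
      constructor
      · rw [htsdef, lt_div_iff_of_neg haneg]; linarith [mul_comm u a]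
      · rw [htsdef, div_lt_iff_of_neg haneg]; linarith [mul_comm v a]
  have hAj : A j ≠ 0 := by
    intro h; apply ha0; rw [hadef, h]; exact Int.cast_zero
  have htj : t j = ts := by
    have h1 : e j.castSucc ≤ ts := le_trans hj1 (le_of_lt hts.1)
    have h2 : ts ≤ e j.succ := le_trans (le_of_lt hts.2) hj2
    rw [htdef]
    simp only [if_neg hAj]
    rw [max_eq_right h1, min_eq_right h2]
  exact hegap' i (t j) (htS1 j) (htj ▸ ⟨hts.1, hts.2⟩)

lemma mcN_min_add {f g : ℝ → ℝ} (hf : McNaughton f) (hg : McNaughton g) :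
    McNaughton (fun x => min 1 (f x + g x)) := by
  refine ⟨isPWLZ_min_add hf.1 hg.1, continuousOn_const.inf (hf.2.1.add hg.2.1), ?_⟩
  intro x hx
  exact ⟨le_min zero_le_one (add_nonneg (hf.2.2 x hx).1 (hg.2.2 x hx).1), min_le_left _ _⟩

lemma mcN_one : McNaughton (fun _ : ℝ => (1:ℝ)) := by
  refine ⟨⟨1, ![(0:ℝ), 1], rfl, rfl, ?_, ?_⟩, continuousOn_const,
    fun x _ => ⟨zero_le_one, le_refl 1⟩⟩
  · rw [Fin.monotone_iff_le_succ]
    intro i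
    fin_cases i
    show (0:ℝ) ≤ 1
    norm_num
  · intro i
    exact ⟨0, 1, fun x _ => by push_cast; ring⟩

lemma bump_mcN (k : ℕ) (m : ℤ) (hkpos : (0:ℝ) < k) (hm1 : 1 ≤ (m:ℝ))
    (hm2 : (m:ℝ) + 2 ≤ k) :
    McNaughton (fun x => min 1 (max 0 ((m:ℝ) - k*x) + max 0 ((k:ℝ)*x - ((m:ℝ)+1)))) := by
  have e0 : (0:ℝ) ≤ ((m:ℝ)-1)/k := div_nonneg (by linarith) (le_of_lt hkpos)
  have e4 : ((m:ℝ)+2)/k ≤ 1 := by rw [div_le_one hkpos]; linarith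
  refine ⟨?_, ?_, ?_⟩
  · refine ⟨5, ![(0:ℝ), ((m:ℝ)-1)/k, (m:ℝ)/k, ((m:ℝ)+1)/k, ((m:ℝ)+2)/k, 1],
      rfl, rfl, ?_, ?_⟩
    · rw [Fin.monotone_iff_le_succ]
      intro i
      fin_cases i
      · show (0:ℝ) ≤ ((m:ℝ)-1)/k; exact e0
      · show ((m:ℝ)-1)/k ≤ (m:ℝ)/k
        gcongr <;> linarith
      · show ((m:ℝ))/k ≤ ((m:ℝ)+1)/k
        gcongr <;> linarith
      · show ((m:ℝ)+1)/k ≤ ((m:ℝ)+2)/k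
        gcongr <;> linarith
      · show ((m:ℝ)+2)/k ≤ 1; exact e4
    · intro i
      fin_cases i
      · refine ⟨0, 1, fun x hx => ?_⟩
        have hx' : x ∈ Set.Icc (0:ℝ) (((m:ℝ)-1)/k) := hx
        have hkx : (k:ℝ)*x ≤ (m:ℝ)-1 := by
          rw [mul_comm, ← le_div_iff₀ hkpos]; exact hx'.2
        show min 1 (max 0 ((m:ℝ) - k*x) + max 0 ((k:ℝ)*x - ((m:ℝ)+1))) = _
        rw [max_eq_right (by linarith : (0:ℝ) ≤ (m:ℝ) - k*x),
          max_eq_left (by linarith : (k:ℝ)*x - ((m:ℝ)+1) ≤ 0),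
          min_eq_left (by linarith)]
        push_cast; ring
      · refine ⟨-(k:ℤ), m, fun x hx => ?_⟩
        have hx' : x ∈ Set.Icc (((m:ℝ)-1)/k) ((m:ℝ)/k) := hx
        have hkx1 : (m:ℝ)-1 ≤ (k:ℝ)*x := by
          rw [mul_comm, ← div_le_iff₀ hkpos]; exact hx'.1
        have hkx2 : (k:ℝ)*x ≤ (m:ℝ) := by
          rw [mul_comm, ← le_div_iff₀ hkpos]; exact hx'.2
        show min 1 (max 0 ((m:ℝ) - k*x) + max 0 ((k:ℝ)*x - ((m:ℝ)+1))) = _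
        rw [max_eq_right (by linarith : (0:ℝ) ≤ (m:ℝ) - k*x),
          max_eq_left (by linarith : (k:ℝ)*x - ((m:ℝ)+1) ≤ 0),
          min_eq_right (by linarith)]
        push_cast; ring
      · refine ⟨0, 0, fun x hx => ?_⟩
        have hx' : x ∈ Set.Icc ((m:ℝ)/k) (((m:ℝ)+1)/k) := hx
        have hkx1 : (m:ℝ) ≤ (k:ℝ)*x := by
          rw [mul_comm, ← div_le_iff₀ hkpos]; exact hx'.1
        have hkx2 : (k:ℝ)*x ≤ (m:ℝ)+1 := by
          rw [mul_comm, ← le_div_iff₀ hkpos]; exact hx'.2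
        show min 1 (max 0 ((m:ℝ) - k*x) + max 0 ((k:ℝ)*x - ((m:ℝ)+1))) = _
        rw [max_eq_left (by linarith : (m:ℝ) - k*x ≤ 0),
          max_eq_left (by linarith : (k:ℝ)*x - ((m:ℝ)+1) ≤ 0),
          min_eq_right (by linarith)]
        push_cast; ring
      · refine ⟨(k:ℤ), -(m+1), fun x hx => ?_⟩
        have hx' : x ∈ Set.Icc (((m:ℝ)+1)/k) (((m:ℝ)+2)/k) := hx
        have hkx1 : (m:ℝ)+1 ≤ (k:ℝ)*x := by
          rw [mul_comm, ← div_le_iff₀ hkpos]; exact hx'.1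
        have hkx2 : (k:ℝ)*x ≤ (m:ℝ)+2 := by
          rw [mul_comm, ← le_div_iff₀ hkpos]; exact hx'.2
        show min 1 (max 0 ((m:ℝ) - k*x) + max 0 ((k:ℝ)*x - ((m:ℝ)+1))) = _
        rw [max_eq_left (by linarith : (m:ℝ) - k*x ≤ 0),
          max_eq_right (by linarith : (0:ℝ) ≤ (k:ℝ)*x - ((m:ℝ)+1)),
          min_eq_right (by linarith)]
        push_cast; ring
      · refine ⟨0, 1, fun x hx => ?_⟩
        have hx' : x ∈ Set.Icc (((m:ℝ)+2)/k) (1:ℝ) := hx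
        have hkx1 : (m:ℝ)+2 ≤ (k:ℝ)*x := by
          rw [mul_comm, ← div_le_iff₀ hkpos]; exact hx'.1
        show min 1 (max 0 ((m:ℝ) - k*x) + max 0 ((k:ℝ)*x - ((m:ℝ)+1))) = _
        rw [max_eq_left (by linarith : (m:ℝ) - k*x ≤ 0),
          max_eq_right (by linarith : (0:ℝ) ≤ (k:ℝ)*x - ((m:ℝ)+1)),
          min_eq_left (by linarith)]
        push_cast; ring
  · have hcont : Continuous fun x : ℝ =>
        min 1 (max 0 ((m:ℝ) - k*x) + max 0 ((k:ℝ)*x - ((m:ℝ)+1))) := by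
      apply Continuous.min continuous_const
      apply Continuous.add
      · exact continuous_const.max (by fun_prop)
      · exact continuous_const.max (by fun_prop)
    exact hcont.continuousOn
  · intro x _
    constructor
    · exact le_min zero_le_one (add_nonneg (le_max_left _ _) (le_max_left _ _))
    · exact min_le_left _ _

/-- For irrational `θ ∈ (0,1)`, the set `𝔧_θ` of McNaughton functions
vanishing at `θ` is a maximal ideal of the MV algebra of McNaughton
functions: it is closed under `⊕`, downward closed, does not contain the
constant `1`, and every ideal strictly containing it contains the
constant `1`. -/
theorem stmt19 (θ : ℝ) (hθ : θ ∈ Set.Ioo (0:ℝ) 1) (hirr : Irrational θ) :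
    -- closed under ⊕
    (∀ f g : ℝ → ℝ, McNaughton f → McNaughton g → f θ = 0 → g θ = 0 →
      McNaughton (fun x => min 1 (f x + g x)) ∧
        (fun x => min 1 (f x + g x)) θ = 0) ∧
    -- downward closed
    (∀ f g : ℝ → ℝ, McNaughton f → McNaughton g → g θ = 0 →
      (∀ x ∈ Set.Icc (0:ℝ) 1, f x ≤ g x) → f θ = 0) ∧
    -- proper: the constant 1 is not in 𝔧_θ
    ¬ ((fun _ : ℝ => (1:ℝ)) θ = 0) ∧
    -- maximality: any ideal strictly containing 𝔧_θ contains the constant 1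
    (∀ I : Set (ℝ → ℝ),
      (∀ f ∈ I, McNaughton f) →
      ((fun _ : ℝ => (0:ℝ)) ∈ I) →
      (∀ f ∈ I, ∀ g ∈ I, (fun x => min 1 (f x + g x)) ∈ I) →
      (∀ f : ℝ → ℝ, McNaughton f → ∀ g ∈ I,
        (∀ x ∈ Set.Icc (0:ℝ) 1, f x ≤ g x) → f ∈ I) →
      (∀ f : ℝ → ℝ, McNaughton f → f θ = 0 → f ∈ I) →
      (∃ f ∈ I, f θ ≠ 0) →
      (fun _ : ℝ => (1:ℝ)) ∈ I) := by
  have hθI : θ ∈ Set.Icc (0:ℝ) 1 := ⟨le_of_lt hθ.1, le_of_lt hθ.2⟩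
  refine ⟨?_, ?_, ?_, ?_⟩
  · intro f g hf hg hfθ hgθ
    refine ⟨mcN_min_add hf hg, ?_⟩
    simp only [hfθ, hgθ, add_zero]
    exact min_eq_right zero_le_one
  · intro f g hf hg hgθ hle
    have h1 : f θ ≤ 0 := hgθ ▸ hle θ hθI
    have h2 : 0 ≤ f θ := (hf.2.2 θ hθI).1
    linarith
  · norm_num
  · rintro I hImcN h0I haddI hdownI hsubI ⟨f, hfI, hfθ⟩
    have hfM := hImcN f hfI
    have hfθpos : 0 < f θ := lt_of_le_of_ne (hfM.2.2 θ hθI).1 (Ne.symm hfθ)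
    -- continuity: get δ
    have hcont : ContinuousWithinAt f (Set.Icc (0:ℝ) 1) θ := hfM.2.1 θ hθI
    rw [Metric.continuousWithinAt_iff] at hcont
    obtain ⟨δ, hδpos, hδ⟩ := hcont (f θ / 2) (by linarith)
    have hflb : ∀ x ∈ Set.Icc (0:ℝ) 1, dist x θ < δ → f θ / 2 ≤ f x := by
      intro x hx hdx
      have h := hδ hx hdx
      rw [Real.dist_eq, abs_lt] at h
      linarith [h.1]
    -- choose k
    obtain ⟨k, hk⟩ := exists_nat_gt (max (max (2/δ) (2/θ)) (2/(1-θ)))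
    have hk1 : 2/δ < (k:ℝ) := lt_of_le_of_lt (le_max_of_le_left (le_max_left _ _)) hk
    have hk2 : 2/θ < (k:ℝ) := lt_of_le_of_lt (le_max_of_le_left (le_max_right _ _)) hk
    have hk3 : 2/(1-θ) < (k:ℝ) := lt_of_le_of_lt (le_max_right _ _) hk
    have hθ1 : (0:ℝ) < 1 - θ := by linarith [hθ.2]
    have hkpos : (0:ℝ) < k := lt_trans (by positivity) hk1
    have h2δ : 2/(k:ℝ) < δ := by
      rw [div_lt_iff₀ hkpos]
      have := (div_lt_iff₀ hδpos).1 hk1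
      linarith [mul_comm (k:ℝ) δ]
    have hkθ : 2 < (k:ℝ)*θ := by
      have := (div_lt_iff₀ hθ.1).1 hk2
      linarith [mul_comm (k:ℝ) θ]
    have hkθ' : (k:ℝ)*θ + 2 < k := by
      have := (div_lt_iff₀ hθ1).1 hk3
      nlinarith
    -- choose m
    set m : ℤ := ⌊(k:ℝ)*θ⌋ with hmdef
    have hirrk : Irrational ((k:ℝ)*θ) := by
      have hkne : k ≠ 0 := by
        intro h; rw [h] at hkpos; simp at hkpos
      exact hirr.natCast_mul hkne
    have hm1 : (m:ℝ) < (k:ℝ)*θ :=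
      lt_of_le_of_ne (Int.floor_le _) (fun h => hirrk.ne_int m h.symm)
    have hm2 : (k:ℝ)*θ < (m:ℝ)+1 := by
      have := Int.lt_floor_add_one ((k:ℝ)*θ)
      push_cast at this ⊢; linarith
    have hm1' : 1 ≤ (m:ℝ) := by
      have h1m : (1:ℝ) < m := by linarith
      linarith
    have hm2' : (m:ℝ) + 2 ≤ k := by linarith
    -- the bump function g
    set g : ℝ → ℝ :=
      fun x => min 1 (max 0 ((m:ℝ) - k*x) + max 0 ((k:ℝ)*x - ((m:ℝ)+1))) with hgdef
    have hgM : McNaughton g := bump_mcN k m hkpos hm1' hm2'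
    have hgθ : g θ = 0 := by
      rw [hgdef]
      simp only
      rw [max_eq_left (by linarith), max_eq_left (by linarith), add_zero]
      exact min_eq_right (zero_le_one)
    have hgI : g ∈ I := hsubI g hgM hgθ
    have hgnonneg : ∀ x : ℝ, 0 ≤ g x :=
      fun x => le_min zero_le_one (add_nonneg (le_max_left _ _) (le_max_left _ _))
    have hgcases : ∀ x : ℝ, g x = 1 ∨ dist x θ < δ := by
      intro x
      rcases le_or_gt 1 (max 0 ((m:ℝ) - k*x) + max 0 ((k:ℝ)*x - ((m:ℝ)+1))) with h | h
      · exact Or.inl (min_eq_left h)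
      · right
        have h1 : (m:ℝ) - k*x < 1 :=
          lt_of_le_of_lt (le_trans (le_max_right 0 _) (le_add_of_nonneg_right (le_max_left _ _))) h
        have h2 : (k:ℝ)*x - ((m:ℝ)+1) < 1 :=
          lt_of_le_of_lt (le_trans (le_max_right 0 _) (le_add_of_nonneg_left (le_max_left _ _))) h
        rw [Real.dist_eq, abs_lt]
        constructor
        · -- x - θ > -(2/k) i.e. kθ - kx < 2
          have : (k:ℝ)*x > m - 1 := by linarith
          have hxθ : (k:ℝ)*(θ - x) < 2 := by nlinarith
          have := (lt_div_iff₀' hkpos).2 hxθ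
          linarith [h2δ, this]
        · have : (k:ℝ)*x < m + 2 := by linarith
          have hxθ : (k:ℝ)*(x - θ) < 2 := by nlinarith
          have := (lt_div_iff₀' hkpos).2 hxθ
          linarith [h2δ, this]
    -- iterated sums of f
    set F : ℕ → (ℝ → ℝ) :=
      fun nn => Nat.rec (motive := fun _ => ℝ → ℝ) (fun _ => (0:ℝ))
        (fun _ Fm => fun x => min 1 (Fm x + f x)) nn
      with hFdef
    have hFI : ∀ nn : ℕ, F nn ∈ I := by
      intro nn
      induction nn with
      | zero => exact h0I
      | succ nn ih => exact haddI (F nn) ih f hfI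
    have hFlb : ∀ nn : ℕ, ∀ x ∈ Set.Icc (0:ℝ) 1, min 1 ((nn:ℝ) * f x) ≤ F nn x := by
      intro nn
      induction nn with
      | zero =>
        intro x _
        simp only [Nat.cast_zero, zero_mul]
        exact le_trans (min_le_right _ _) (le_refl _)
      | succ nn ih =>
        intro x hx
        have hfx : 0 ≤ f x := (hfM.2.2 x hx).1
        have h1 := ih x hx
        have step : min 1 (((nn:ℝ)+1) * f x) ≤ min 1 (min 1 ((nn:ℝ) * f x) + f x) := by
          rcases le_or_gt 1 ((nn:ℝ) * f x) with h | h
          · rw [min_eq_left h]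
            exact le_trans (min_le_left _ _) (le_min le_rfl (by linarith))
          · rw [min_eq_right (le_of_lt h)]
            have : ((nn:ℝ)+1) * f x = (nn:ℝ) * f x + f x := by ring
            rw [this]
          -- done
        have mono : min 1 (min 1 ((nn:ℝ) * f x) + f x) ≤ min 1 (F nn x + f x) :=
          min_le_min (le_refl 1) (by linarith)
        calc min 1 (((nn:ℕ)+1 : ℕ) * f x : ℝ) = min 1 (((nn:ℝ)+1) * f x) := by push_cast; ring_nf
        _ ≤ min 1 (min 1 ((nn:ℝ) * f x) + f x) := step
        _ ≤ min 1 (F nn x + f x) := mono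
        _ = F (nn+1) x := rfl
    have hFnonneg : ∀ nn : ℕ, ∀ x ∈ Set.Icc (0:ℝ) 1, 0 ≤ F nn x := by
      intro nn x hx
      refine le_trans ?_ (hFlb nn x hx)
      exact le_min zero_le_one (mul_nonneg (Nat.cast_nonneg nn) (hfM.2.2 x hx).1)
    -- choose n
    obtain ⟨nM, hnM⟩ := exists_nat_gt (2 / f θ)
    have hFbig : ∀ x ∈ Set.Icc (0:ℝ) 1, dist x θ < δ → 1 ≤ F nM x := by
      intro x hx hdx
      have hfx := hflb x hx hdx
      have : 1 ≤ (nM:ℝ) * f x := by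
        have h2 : 2 / f θ * (f θ / 2) = 1 := by field_simp
        nlinarith [mul_le_mul (le_of_lt hnM) hfx (by linarith) (le_of_lt (lt_trans (by positivity) hnM))]
      calc (1:ℝ) = min 1 ((nM:ℝ) * f x) := (min_eq_left this).symm
      _ ≤ F nM x := hFlb nM x hx
    -- the fusion
    set h : ℝ → ℝ := fun x => min 1 (F nM x + g x) with hhdef
    have hhI : h ∈ I := haddI (F nM) (hFI nM) g hgI
    have hone : ∀ x ∈ Set.Icc (0:ℝ) 1, (1:ℝ) ≤ h x := by
      intro x hx
      rcases hgcases x with hcase | hcase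
      · exact le_min (le_refl 1) (by linarith [hFnonneg nM x hx, hcase])
      · exact le_min (le_refl 1) (by linarith [hFbig x hx hcase, hgnonneg x])
    exact hdownI (fun _ => (1:ℝ)) mcN_one h hhI hone
end
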